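/- arXiv:1602.00291 — 4 statements merged into one kernel-verified Lean document; each statement's English description precedes it below -/
import Mathlib

section
/- For any complete bipartite graph K_{r,t} with (r,t) ≠ (1,1), the edge metric dimension equals r + t − 2. -/
open SimpleGraph

/-- Distance from a vertex `v` to an edge `e = uw`: `min (d v u) (d v w)`. -/
noncomputable def edgeDist {V : Type*} (G : SimpleGraph V) (v : V) (e : Sym2 V) : ℕ :=
  Sym2.lift ⟨fun u w => min (G.dist v u) (G.dist v w), fun u w => by simp [min_comm]⟩ e

/-- `S` is an edge metric generator: every two distinct edges are distinguished
by some vertex of `S`. -/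
def IsEdgeMetricGenerator {V : Type*} (G : SimpleGraph V) (S : Set V) : Prop :=
  ∀ e₁ ∈ G.edgeSet, ∀ e₂ ∈ G.edgeSet, e₁ ≠ e₂ →
    ∃ v ∈ S, edgeDist G v e₁ ≠ edgeDist G v e₂

/-- The edge metric dimension: minimum cardinality of an edge metric generator. -/
noncomputable def edim {V : Type*} (G : SimpleGraph V) : ℕ :=
  sInf {k | ∃ S : Finset V, S.card = k ∧ IsEdgeMetricGenerator G ↑S}


section Aux
variable {r t : ℕ}

local notation "G" => completeBipartiteGraph (Fin r) (Fin t)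

lemma edge_form {e : Sym2 (Fin r ⊕ Fin t)} (he : e ∈ (G).edgeSet) :
    ∃ a b, e = s(Sum.inl a, Sum.inr b) := by
  induction e using Sym2.ind with
  | _ x y =>
    simp only [mem_edgeSet, completeBipartiteGraph_adj] at he
    rcases he with ⟨hx, hy⟩ | ⟨hx, hy⟩
    · obtain ⟨a, rfl⟩ := Sum.isLeft_iff.mp hx
      obtain ⟨b, rfl⟩ := Sum.isRight_iff.mp hy
      exact ⟨a, b, rfl⟩
    · obtain ⟨b, rfl⟩ := Sum.isRight_iff.mp hx
      obtain ⟨a, rfl⟩ := Sum.isLeft_iff.mp hy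
      exact ⟨a, b, Sym2.eq_swap⟩

lemma adj_lr (a : Fin r) (b : Fin t) : (G).Adj (Sum.inl a) (Sum.inr b) := by simp

lemma edgeDist_eval (v : Fin r ⊕ Fin t) (a : Fin r) (b : Fin t) :
    edgeDist G v s(Sum.inl a, Sum.inr b)
      = if v = Sum.inl a ∨ v = Sum.inr b then 0 else 1 := by
  have hd : edgeDist G v s(Sum.inl a, Sum.inr b)
      = min ((G).dist v (Sum.inl a)) ((G).dist v (Sum.inr b)) := rfl
  rw [hd]
  cases v with
  | inl c =>
    have h1 : (G).dist (Sum.inl c) (Sum.inr b) = 1 :=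
      dist_eq_one_iff_adj.mpr (adj_lr c b)
    by_cases hca : c = a
    · subst hca
      simp [SimpleGraph.dist_self, h1]
    · have hreach : (G).Reachable (Sum.inl c) (Sum.inl a) :=
        ((adj_lr c b).reachable).trans ((adj_lr a b).reachable.symm)
      have hne : (G).dist (Sum.inl c) (Sum.inl a) ≠ 0 := by
        rw [ne_eq, SimpleGraph.dist_eq_zero_iff_eq_or_not_reachable]
        push_neg
        exact ⟨by simp [hca], hreach⟩
      have : ¬((Sum.inl c : Fin r ⊕ Fin t) = Sum.inl a ∨ (Sum.inl c : Fin r ⊕ Fin t) = Sum.inr b) := by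
        simp [hca]
      rw [if_neg this, h1]
      omega
  | inr c =>
    have h1 : (G).dist (Sum.inr c) (Sum.inl a) = 1 :=
      dist_eq_one_iff_adj.mpr (adj_lr a b).symm
    by_cases hcb : c = b
    · subst hcb
      simp [SimpleGraph.dist_self, h1]
    · have hreach : (G).Reachable (Sum.inr c) (Sum.inr b) :=
        ((adj_lr a c).symm.reachable).trans ((adj_lr a b).reachable)
      have hne : (G).dist (Sum.inr c) (Sum.inr b) ≠ 0 := by
        rw [ne_eq, SimpleGraph.dist_eq_zero_iff_eq_or_not_reachable]
        push_neg
        exact ⟨by simp [hcb], hreach⟩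
      have : ¬((Sum.inr c : Fin r ⊕ Fin t) = Sum.inl a ∨ (Sum.inr c : Fin r ⊕ Fin t) = Sum.inr b) := by
        simp [hcb]
      rw [if_neg this, h1]
      omega

end Aux

section Main
variable {r t : ℕ}

lemma upper_gen (hr : 1 ≤ r) (ht : 1 ≤ t) :
    ∃ S : Finset (Fin r ⊕ Fin t), S.card = r + t - 2 ∧
      IsEdgeMetricGenerator (completeBipartiteGraph (Fin r) (Fin t)) ↑S := by
  set a0 : Fin r := ⟨0, hr⟩
  set b0 : Fin t := ⟨0, ht⟩
  set S : Finset (Fin r ⊕ Fin t) :=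
    ((Finset.univ.erase a0).image Sum.inl) ∪ ((Finset.univ.erase b0).image Sum.inr) with hSdef
  refine ⟨S, ?_, ?_⟩
  · have hdisj : Disjoint ((Finset.univ.erase a0).image (Sum.inl : Fin r → Fin r ⊕ Fin t))
        ((Finset.univ.erase b0).image Sum.inr) := by
      simp [Finset.disjoint_left]
    rw [hSdef, Finset.card_union_of_disjoint hdisj,
      Finset.card_image_of_injective _ Sum.inl_injective,
      Finset.card_image_of_injective _ Sum.inr_injective,
      Finset.card_erase_of_mem (Finset.mem_univ _),
      Finset.card_erase_of_mem (Finset.mem_univ _)]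
    simp
    omega
  · intro e1 he1 e2 he2 hne
    obtain ⟨a, b, rfl⟩ := edge_form he1
    obtain ⟨a', b', rfl⟩ := edge_form he2
    have hmemS : ∀ v : Fin r ⊕ Fin t,
        ((∃ c, c ≠ a0 ∧ v = Sum.inl c) ∨ (∃ c, c ≠ b0 ∧ v = Sum.inr c)) → v ∈ (S : Set (Fin r ⊕ Fin t)) := by
      rintro v (⟨c, hc, rfl⟩ | ⟨c, hc, rfl⟩) <;>
        simp [hSdef, hc]
    have hnab : ¬(a = a' ∧ b = b') := by
      rintro ⟨rfl, rfl⟩; exact hne rfl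
    by_cases haa : a = a'
    · have hbb : b ≠ b' := fun hb => hnab ⟨haa, hb⟩
      by_cases hb0 : b = b0
      · refine ⟨Sum.inr b', hmemS _ (Or.inr ⟨b', fun hc => hbb (hb0.trans hc.symm), rfl⟩), ?_⟩
        rw [edgeDist_eval, edgeDist_eval]
        simp [hbb.symm, Ne.symm]
      · refine ⟨Sum.inr b, hmemS _ (Or.inr ⟨b, hb0, rfl⟩), ?_⟩
        rw [edgeDist_eval, edgeDist_eval]
        simp [hbb]
    · by_cases ha0 : a = a0
      · have ha' : a' ≠ a0 := fun hc => haa (ha0.trans hc.symm)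
        refine ⟨Sum.inl a', hmemS _ (Or.inl ⟨a', ha', rfl⟩), ?_⟩
        rw [edgeDist_eval, edgeDist_eval]
        have : a' ≠ a := fun hc => haa hc.symm
        simp [this]
      · refine ⟨Sum.inl a, hmemS _ (Or.inl ⟨a, ha0, rfl⟩), ?_⟩
        rw [edgeDist_eval, edgeDist_eval]
        simp [haa]

lemma lower_bound (hr : 1 ≤ r) (ht : 1 ≤ t) (S : Finset (Fin r ⊕ Fin t))
    (hS : IsEdgeMetricGenerator (completeBipartiteGraph (Fin r) (Fin t)) ↑S) :
    r + t - 2 ≤ S.card := by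
  set a0 : Fin r := ⟨0, hr⟩
  set b0 : Fin t := ⟨0, ht⟩
  -- at most one missing on the left
  have hleft : ∀ a a' : Fin r, Sum.inl a ∉ S → Sum.inl a' ∉ S → a = a' := by
    intro a a' ha ha'
    by_contra haa
    have hne : s(Sum.inl a, Sum.inr b0) ≠ (s(Sum.inl a', Sum.inr b0) : Sym2 (Fin r ⊕ Fin t)) := by
      intro heq
      rw [Sym2.eq_iff] at heq
      rcases heq with ⟨h1, _⟩ | ⟨h1, _⟩ <;> simp_all
    obtain ⟨v, hvS, hv⟩ := hS _ ((completeBipartiteGraph (Fin r) (Fin t)).mem_edgeSet.mpr (adj_lr a b0)) _ ((completeBipartiteGraph (Fin r) (Fin t)).mem_edgeSet.mpr (adj_lr a' b0)) hne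
    rw [edgeDist_eval, edgeDist_eval] at hv
    by_cases h1 : v = Sum.inl a ∨ v = Sum.inr b0
    · by_cases h2 : v = Sum.inl a' ∨ v = Sum.inr b0
      · rw [if_pos h1, if_pos h2] at hv; exact hv rfl
      · rcases h1 with rfl | rfl
        · exact ha hvS
        · exact h2 (Or.inr rfl)
    · by_cases h2 : v = Sum.inl a' ∨ v = Sum.inr b0
      · rcases h2 with rfl | rfl
        · exact ha' hvS
        · exact h1 (Or.inr rfl)
      · rw [if_neg h1, if_neg h2] at hv; exact hv rfl
  have hright : ∀ b b' : Fin t, Sum.inr b ∉ S → Sum.inr b' ∉ S → b = b' := by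
    intro b b' hb hb'
    by_contra hbb
    have hne : s(Sum.inl a0, Sum.inr b) ≠ (s(Sum.inl a0, Sum.inr b') : Sym2 (Fin r ⊕ Fin t)) := by
      intro heq
      rw [Sym2.eq_iff] at heq
      rcases heq with ⟨_, h1⟩ | ⟨h1, _⟩ <;> simp_all
    obtain ⟨v, hvS, hv⟩ := hS _ ((completeBipartiteGraph (Fin r) (Fin t)).mem_edgeSet.mpr (adj_lr a0 b)) _ ((completeBipartiteGraph (Fin r) (Fin t)).mem_edgeSet.mpr (adj_lr a0 b')) hne
    rw [edgeDist_eval, edgeDist_eval] at hv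
    by_cases h1 : v = Sum.inl a0 ∨ v = Sum.inr b
    · by_cases h2 : v = Sum.inl a0 ∨ v = Sum.inr b'
      · rw [if_pos h1, if_pos h2] at hv; exact hv rfl
      · rcases h1 with rfl | rfl
        · exact h2 (Or.inl rfl)
        · exact hb hvS
    · by_cases h2 : v = Sum.inl a0 ∨ v = Sum.inr b'
      · rcases h2 with rfl | rfl
        · exact h1 (Or.inl rfl)
        · exact hb' hvS
      · rw [if_neg h1, if_neg h2] at hv; exact hv rfl
  set A : Finset (Fin r) := Finset.univ.filter (fun a => Sum.inl a ∈ S) with hA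
  set B : Finset (Fin t) := Finset.univ.filter (fun b => Sum.inr b ∈ S) with hB
  have hAcard : r - 1 ≤ A.card := by
    have h1 : (Finset.univ.filter (fun a : Fin r => Sum.inl a ∉ S)).card ≤ 1 := by
      apply Finset.card_le_one.mpr
      intro a haA a' ha'A
      simp only [Finset.mem_filter] at haA ha'A
      exact hleft a a' haA.2 ha'A.2
    have h2 : A.card + (Finset.univ.filter (fun a : Fin r => Sum.inl a ∉ S)).card = r := by
      rw [hA]
      simpa using Finset.card_filter_add_card_filter_not
        (s := (Finset.univ : Finset (Fin r))) (p := fun a => Sum.inl a ∈ S)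
    omega
  have hBcard : t - 1 ≤ B.card := by
    have h1 : (Finset.univ.filter (fun b : Fin t => Sum.inr b ∉ S)).card ≤ 1 := by
      apply Finset.card_le_one.mpr
      intro b hbB b' hb'B
      simp only [Finset.mem_filter] at hbB hb'B
      exact hright b b' hbB.2 hb'B.2
    have h2 : B.card + (Finset.univ.filter (fun b : Fin t => Sum.inr b ∉ S)).card = t := by
      rw [hB]
      simpa using Finset.card_filter_add_card_filter_not
        (s := (Finset.univ : Finset (Fin t))) (p := fun b => Sum.inr b ∈ S)
    omega
  have hsub : (A.image Sum.inl ∪ B.image Sum.inr) ⊆ S := by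
    intro v hv
    simp only [Finset.mem_union, Finset.mem_image, hA, hB, Finset.mem_filter] at hv
    rcases hv with ⟨a, ⟨_, ha⟩, rfl⟩ | ⟨b, ⟨_, hb⟩, rfl⟩ <;> assumption
  have hdisj : Disjoint (A.image (Sum.inl : Fin r → Fin r ⊕ Fin t)) (B.image Sum.inr) := by
    simp [Finset.disjoint_left]
  have hcard : A.card + B.card ≤ S.card := by
    calc A.card + B.card
        = (A.image Sum.inl ∪ B.image Sum.inr).card := by
          rw [Finset.card_union_of_disjoint hdisj,
            Finset.card_image_of_injective _ Sum.inl_injective,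
            Finset.card_image_of_injective _ Sum.inr_injective]
      _ ≤ S.card := Finset.card_le_card hsub
  omega

end Main

theorem edim_completeBipartite (r t : ℕ) (hr : 1 ≤ r) (ht : 1 ≤ t)
    (h : (r, t) ≠ (1, 1)) :
    edim (completeBipartiteGraph (Fin r) (Fin t)) = r + t - 2 := by
  obtain ⟨S, hScard, hSgen⟩ := upper_gen hr ht
  apply le_antisymm
  · exact Nat.sInf_le ⟨S, hScard, hSgen⟩
  · exact le_csInf ⟨r + t - 2, S, hScard, hSgen⟩
      (by rintro k ⟨T, rfl, hT⟩; exact lower_bound hr ht T hT)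
end

section
/- For any complete bipartite graph K_{r,t} with (r,t) ≠ (1,1), any edge metric generator contains all but at most one vertex from each of the two parts; hence every edge metric generator has size at least r + t − 2. -/
open SimpleGraph

lemma dist_inl_eq {r t : ℕ} (j₀ : Fin t) (v : Fin r ⊕ Fin t) (i₁ i₂ : Fin r)
    (h1 : v ≠ Sum.inl i₁) (h2 : v ≠ Sum.inl i₂) :
    (completeBipartiteGraph (Fin r) (Fin t)).dist v (Sum.inl i₁) =
    (completeBipartiteGraph (Fin r) (Fin t)).dist v (Sum.inl i₂) := by
  have key : ∀ (i : Fin r), v ≠ Sum.inl i →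
      (completeBipartiteGraph (Fin r) (Fin t)).dist v (Sum.inl i) =
      Sum.elim (fun _ => 2) (fun _ => 1) v := by
    intro i hne
    cases v with
    | inr j =>
      simp only [Sum.elim_inr]
      rw [SimpleGraph.dist_eq_one_iff_adj]; simp
    | inl i' =>
      simp only [Sum.elim_inl]
      have hadj1 : (completeBipartiteGraph (Fin r) (Fin t)).Adj (Sum.inl i') (Sum.inr j₀) := by simp
      have hadj2 : (completeBipartiteGraph (Fin r) (Fin t)).Adj (Sum.inr j₀) (Sum.inl i) := by simp
      have hle : (completeBipartiteGraph (Fin r) (Fin t)).dist (Sum.inl i') (Sum.inl i) ≤ 2 :=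
        SimpleGraph.dist_le (hadj1.toWalk.append hadj2.toWalk)
      have hne0 : (completeBipartiteGraph (Fin r) (Fin t)).dist (Sum.inl i') (Sum.inl i) ≠ 0 := by
        rw [ne_eq, SimpleGraph.dist_eq_zero_iff_eq_or_not_reachable]
        push_neg
        exact ⟨hne, (hadj1.toWalk.append hadj2.toWalk).reachable⟩
      have hne1 : (completeBipartiteGraph (Fin r) (Fin t)).dist (Sum.inl i') (Sum.inl i) ≠ 1 := by
        rw [ne_eq, SimpleGraph.dist_eq_one_iff_adj]; simp
      omega
  rw [key i₁ h1, key i₂ h2]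

lemma dist_inr_eq {r t : ℕ} (i₀ : Fin r) (v : Fin r ⊕ Fin t) (j₁ j₂ : Fin t)
    (h1 : v ≠ Sum.inr j₁) (h2 : v ≠ Sum.inr j₂) :
    (completeBipartiteGraph (Fin r) (Fin t)).dist v (Sum.inr j₁) =
    (completeBipartiteGraph (Fin r) (Fin t)).dist v (Sum.inr j₂) := by
  have key : ∀ (j : Fin t), v ≠ Sum.inr j →
      (completeBipartiteGraph (Fin r) (Fin t)).dist v (Sum.inr j) =
      Sum.elim (fun _ => 1) (fun _ => 2) v := by
    intro j hne
    cases v with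
    | inl i =>
      simp only [Sum.elim_inl]
      rw [SimpleGraph.dist_eq_one_iff_adj]; simp
    | inr j' =>
      simp only [Sum.elim_inr]
      have hadj1 : (completeBipartiteGraph (Fin r) (Fin t)).Adj (Sum.inr j') (Sum.inl i₀) := by simp
      have hadj2 : (completeBipartiteGraph (Fin r) (Fin t)).Adj (Sum.inl i₀) (Sum.inr j) := by simp
      have hle : (completeBipartiteGraph (Fin r) (Fin t)).dist (Sum.inr j') (Sum.inr j) ≤ 2 :=
        SimpleGraph.dist_le (hadj1.toWalk.append hadj2.toWalk)
      have hne0 : (completeBipartiteGraph (Fin r) (Fin t)).dist (Sum.inr j') (Sum.inr j) ≠ 0 := by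
        rw [ne_eq, SimpleGraph.dist_eq_zero_iff_eq_or_not_reachable]
        push_neg
        exact ⟨hne, (hadj1.toWalk.append hadj2.toWalk).reachable⟩
      have hne1 : (completeBipartiteGraph (Fin r) (Fin t)).dist (Sum.inr j') (Sum.inr j) ≠ 1 := by
        rw [ne_eq, SimpleGraph.dist_eq_one_iff_adj]; simp
      omega
  rw [key j₁ h1, key j₂ h2]

theorem completeBipartite_generator_lower (r t : ℕ) (hr : 1 ≤ r) (ht : 1 ≤ t)
    (h : (r, t) ≠ (1, 1)) (S : Finset (Fin r ⊕ Fin t))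
    (hS : IsEdgeMetricGenerator (completeBipartiteGraph (Fin r) (Fin t)) ↑S) :
    (Finset.univ.filter fun i : Fin r => Sum.inl i ∉ S).card ≤ 1 ∧
    (Finset.univ.filter fun j : Fin t => Sum.inr j ∉ S).card ≤ 1 ∧
    r + t - 2 ≤ S.card := by
  classical
  set G := completeBipartiteGraph (Fin r) (Fin t) with hG
  obtain ⟨j₀⟩ : Nonempty (Fin t) := ⟨⟨0, ht⟩⟩
  obtain ⟨i₀⟩ : Nonempty (Fin r) := ⟨⟨0, hr⟩⟩
  have hleft : (Finset.univ.filter fun i : Fin r => Sum.inl i ∉ S).card ≤ 1 := by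
    by_contra hc
    push_neg at hc
    obtain ⟨i₁, hi₁, i₂, hi₂, hne⟩ := Finset.one_lt_card.mp hc
    simp only [Finset.mem_filter] at hi₁ hi₂
    have he₁ : s(Sum.inl i₁, (Sum.inr j₀ : Fin r ⊕ Fin t)) ∈ G.edgeSet := by simp [hG]
    have he₂ : s(Sum.inl i₂, (Sum.inr j₀ : Fin r ⊕ Fin t)) ∈ G.edgeSet := by simp [hG]
    have hedne : s(Sum.inl i₁, (Sum.inr j₀ : Fin r ⊕ Fin t)) ≠ s(Sum.inl i₂, Sum.inr j₀) := by
      simp [Sym2.eq_iff, hne]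
    obtain ⟨v, hvS, hv⟩ := hS _ he₁ _ he₂ hedne
    apply hv
    have hv1 : v ≠ Sum.inl i₁ := fun e => hi₁.2 (e ▸ hvS)
    have hv2 : v ≠ Sum.inl i₂ := fun e => hi₂.2 (e ▸ hvS)
    simp only [edgeDist, Sym2.lift_mk]
    rw [dist_inl_eq j₀ v i₁ i₂ hv1 hv2]
  have hright : (Finset.univ.filter fun j : Fin t => Sum.inr j ∉ S).card ≤ 1 := by
    by_contra hc
    push_neg at hc
    obtain ⟨j₁, hj₁, j₂, hj₂, hne⟩ := Finset.one_lt_card.mp hc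
    simp only [Finset.mem_filter] at hj₁ hj₂
    have he₁ : s((Sum.inl i₀ : Fin r ⊕ Fin t), Sum.inr j₁) ∈ G.edgeSet := by simp [hG]
    have he₂ : s((Sum.inl i₀ : Fin r ⊕ Fin t), Sum.inr j₂) ∈ G.edgeSet := by simp [hG]
    have hedne : s((Sum.inl i₀ : Fin r ⊕ Fin t), Sum.inr j₁) ≠ s(Sum.inl i₀, Sum.inr j₂) := by
      simp [Sym2.eq_iff, hne]
    obtain ⟨v, hvS, hv⟩ := hS _ he₁ _ he₂ hedne
    apply hv
    have hv1 : v ≠ Sum.inr j₁ := fun e => hj₁.2 (e ▸ hvS)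
    have hv2 : v ≠ Sum.inr j₂ := fun e => hj₂.2 (e ▸ hvS)
    simp only [edgeDist, Sym2.lift_mk]
    rw [dist_inr_eq i₀ v j₁ j₂ hv1 hv2]
  refine ⟨hleft, hright, ?_⟩
  -- cardinality bound
  set A := (Finset.univ.filter fun i : Fin r => Sum.inl i ∈ S).image (Sum.inl : Fin r → Fin r ⊕ Fin t) with hA
  set B := (Finset.univ.filter fun j : Fin t => Sum.inr j ∈ S).image (Sum.inr : Fin t → Fin r ⊕ Fin t) with hB
  have hAsub : A ⊆ S := by
    intro x hx
    simp only [hA, Finset.mem_image, Finset.mem_filter] at hx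
    obtain ⟨i, ⟨_, hi⟩, rfl⟩ := hx
    exact hi
  have hBsub : B ⊆ S := by
    intro x hx
    simp only [hB, Finset.mem_image, Finset.mem_filter] at hx
    obtain ⟨j, ⟨_, hj⟩, rfl⟩ := hx
    exact hj
  have hdisj : Disjoint A B := by
    rw [Finset.disjoint_left]
    intro x hx hx'
    simp only [hA, hB, Finset.mem_image] at hx hx'
    obtain ⟨i, _, rfl⟩ := hx
    obtain ⟨j, _, hj⟩ := hx'
    exact absurd hj (by simp)
  have hcardA : A.card = (Finset.univ.filter fun i : Fin r => Sum.inl i ∈ S).card :=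
    Finset.card_image_of_injective _ (Sum.inl_injective (α := Fin r) (β := Fin t))
  have hcardB : B.card = (Finset.univ.filter fun j : Fin t => Sum.inr j ∈ S).card :=
    Finset.card_image_of_injective _ (Sum.inr_injective (α := Fin r) (β := Fin t))
  have hsplitA := Finset.card_filter_add_card_filter_not
    (s := (Finset.univ : Finset (Fin r))) (p := fun i => Sum.inl i ∈ S)
  have hsplitB := Finset.card_filter_add_card_filter_not
    (s := (Finset.univ : Finset (Fin t))) (p := fun j => Sum.inr j ∈ S)
  simp only [Finset.card_univ, Fintype.card_fin] at hsplitA hsplitB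
  have hunion : (A ∪ B).card ≤ S.card :=
    Finset.card_le_card (Finset.union_subset hAsub hBsub)
  rw [Finset.card_union_of_disjoint hdisj] at hunion
  omega
end

section
/- For the grid graph G = P_r □ P_t with r ≥ t ≥ 2, the set consisting of the two corner vertices (0,0) and (r−1,0) is an edge metric generator, and edim(G) = 2. -/
/-!
Grid distances are `L¹` distances. If `w` is the right or upper neighbour of `u`, the distances
from the edge `uw` to the corners `(0, 0)` and `(r - 1, 0)` are `u.1 + u.2` and
`r - 1 - w.1 + u.2`. Their sum `r - 1 + 2 u.2 - [uw is horizontal]` gives the orientation of the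
edge by parity and then its row, after which the first distance gives its column.

No single vertex `v` resolves the edges of a product `G □ H` of connected nontrivial graphs: take
any `(a, b)` with `a ≠ v.1`, `b ≠ v.2` and neighbours `a'`, `b'` of `a`, `b` one step closer to
`v.1`, `v.2`; the edges `(a, b)(a', b)` and `(a, b)(a, b')` are both at distance
`d(v, (a, b)) - 1` from `v`.
-/

open SimpleGraph

namespace SimpleGraph

variable {V α β : Type*} {G : SimpleGraph V} {u v : V}

lemma Reachable.le_add_dist {f : V → ℕ} (hf : ∀ x y, G.Adj x y → f x ≤ f y + 1)
    (h : G.Reachable u v) : f u ≤ f v + G.dist u v := by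
  obtain ⟨p, hp⟩ := h.exists_walk_length_eq_dist
  rw [← hp]
  clear hp h
  induction p with
  | nil => simp
  | cons hadj p ih =>
    have := hf _ _ hadj
    rw [Walk.length_cons]
    omega

lemma Reachable.exists_adj_dist_eq_add_one (h : G.Reachable u v) (hne : u ≠ v) :
    ∃ w, G.Adj v w ∧ G.dist u v = G.dist u w + 1 := by
  obtain ⟨p, hp⟩ := h.symm.exists_walk_length_eq_dist
  cases p with
  | nil => exact absurd rfl hne
  | cons hadj q =>
    refine ⟨_, hadj, le_antisymm ?_ ?_⟩
    · calc G.dist u v ≤ G.dist u _ + G.dist _ v := (h.trans hadj.reachable).dist_triangle_left v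
        _ = G.dist u _ + 1 := by rw [dist_eq_one_iff_adj.2 hadj.symm]
    · have := dist_le q
      rw [Walk.length_cons, dist_comm] at hp
      rw [dist_comm]
      omega

lemma dist_boxProd {G : SimpleGraph α} {H : SimpleGraph β} (hG : G.Preconnected)
    (hH : H.Preconnected) (x y : α × β) :
    (G □ H).dist x y = G.dist x.1 y.1 + H.dist x.2 y.2 := by
  have hGH : (G □ H).Reachable x y := (hG.boxProd hH) x y
  apply Nat.cast_injective (R := ℕ∞)
  rw [hGH.coe_dist_eq_edist, Nat.cast_add, (hG x.1 y.1).coe_dist_eq_edist,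
    (hH x.2 y.2).coe_dist_eq_edist, edist_boxProd]

lemma pathGraph_dist {n : ℕ} (i j : Fin n) : (pathGraph n).dist i j = Nat.dist i j := by
  have hf : ∀ x y : Fin n, (pathGraph n).Adj x y → (x : ℕ) ≤ y + 1 := by
    intro x y hxy
    rw [pathGraph_adj] at hxy
    omega
  have hij := (pathGraph_preconnected n i j).le_add_dist hf
  have hji := (pathGraph_preconnected n j i).le_add_dist hf
  rw [dist_comm] at hji
  have h_le : ∀ k (i j : Fin n), (j : ℕ) = i + k → (pathGraph n).dist i j ≤ k := by
    intro k
    induction k with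
    | zero => intro i j h; obtain rfl : i = j := Fin.ext (by omega); simp
    | succ k ih =>
      intro i j h
      let m : Fin n := ⟨i + k, by omega⟩
      have hmj : (pathGraph n).Adj m j := by
        rw [pathGraph_adj]; left; show (i : ℕ) + k + 1 = j; omega
      calc (pathGraph n).dist i j ≤ (pathGraph n).dist i m + (pathGraph n).dist m j :=
            (pathGraph_preconnected n i m).dist_triangle_left j
        _ ≤ k + 1 := by rw [dist_eq_one_iff_adj.2 hmj]; exact Nat.add_le_add_right (ih i m rfl) 1
  unfold Nat.dist
  rcases le_total (i : ℕ) j with h | h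
  · have := h_le (j - i) i j (by omega); omega
  · have := h_le (i - j) j i (by omega); rw [dist_comm] at this; omega

end SimpleGraph

section EdgeMetricDimension

variable {V α β : Type*} {G : SimpleGraph V}

lemma edgeDist_mk (v u w : V) : edgeDist G v s(u, w) = min (G.dist v u) (G.dist v w) := rfl

lemma IsEdgeMetricGenerator.mono {S T : Set V} (hS : IsEdgeMetricGenerator G S) (hST : S ⊆ T) :
    IsEdgeMetricGenerator G T := fun e₁ he₁ e₂ he₂ hne ↦
  let ⟨v, hv, hd⟩ := hS e₁ he₁ e₂ he₂ hne
  ⟨v, hST hv, hd⟩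

lemma edim_le_card {S : Finset V} (hS : IsEdgeMetricGenerator G S) : edim G ≤ S.card :=
  Nat.sInf_le ⟨S, rfl, hS⟩

lemma edim_eq_two {a b : V} (hab : a ≠ b) (hpair : IsEdgeMetricGenerator G {a, b})
    (hsingle : ∀ v, ¬IsEdgeMetricGenerator G {v}) : edim G = 2 := by
  classical
  have hpair' : IsEdgeMetricGenerator G ↑({a, b} : Finset V) := by rwa [Finset.coe_pair]
  refine le_antisymm ((edim_le_card hpair').trans (Finset.card_pair hab).le)
    (le_csInf ⟨_, _, rfl, hpair'⟩ ?_)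
  rintro _ ⟨T, rfl, hT⟩
  by_contra! hcard
  have : Nonempty V := ⟨a⟩
  obtain ⟨v, hv⟩ := Finset.card_le_one_iff_subset_singleton.1 (Nat.le_of_lt_succ hcard)
  exact hsingle v (hT.mono (by rw [← Finset.coe_singleton]; exact Finset.coe_subset.2 hv))

lemma not_isEdgeMetricGenerator_boxProd_singleton {G : SimpleGraph α} {H : SimpleGraph β}
    [Nontrivial α] [Nontrivial β] (hG : G.Preconnected) (hH : H.Preconnected) (v : α × β) :
    ¬IsEdgeMetricGenerator (G □ H) {v} := by
  obtain ⟨a, ha⟩ := exists_ne v.1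
  obtain ⟨b, hb⟩ := exists_ne v.2
  obtain ⟨a', haa', hda⟩ := (hG v.1 a).exists_adj_dist_eq_add_one ha.symm
  obtain ⟨b', hbb', hdb⟩ := (hH v.2 b).exists_adj_dist_eq_add_one hb.symm
  intro hgen
  obtain ⟨_, rfl, hne⟩ := hgen s((a, b), (a', b)) (by simp [boxProd_adj, haa'])
    s((a, b), (a, b')) (by simp [boxProd_adj, hbb']) (by simp [haa'.ne'])
  apply hne
  simp only [edgeDist_mk, dist_boxProd hG hH]
  omega

end EdgeMetricDimension

section Grid

variable {r t : ℕ}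

lemma grid_dist (p q : Fin r × Fin t) :
    (pathGraph r □ pathGraph t).dist p q = Nat.dist p.1 q.1 + Nat.dist p.2 q.2 := by
  rw [dist_boxProd (pathGraph_preconnected r) (pathGraph_preconnected t), pathGraph_dist,
    pathGraph_dist]

def IsGridStep (u w : Fin r × Fin t) : Prop :=
  (u.1 : ℕ) + 1 = w.1 ∧ (u.2 : ℕ) = w.2 ∨ (u.1 : ℕ) = w.1 ∧ (u.2 : ℕ) + 1 = w.2

lemma exists_eq_mk_isGridStep {e : Sym2 (Fin r × Fin t)}
    (he : e ∈ (pathGraph r □ pathGraph t).edgeSet) :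
    ∃ u w : Fin r × Fin t, e = s(u, w) ∧ IsGridStep u w := by
  induction e using Sym2.ind with
  | _ u w =>
  rw [mem_edgeSet, boxProd_adj, pathGraph_adj, pathGraph_adj] at he
  rcases he with ⟨h | h, h'⟩ | ⟨h | h, h'⟩
  · exact ⟨u, w, rfl, .inl ⟨h, congrArg Fin.val h'⟩⟩
  · exact ⟨w, u, Sym2.eq_swap, .inl ⟨h, congrArg Fin.val h'.symm⟩⟩
  · exact ⟨u, w, rfl, .inr ⟨congrArg Fin.val h', h⟩⟩
  · exact ⟨w, u, Sym2.eq_swap, .inr ⟨congrArg Fin.val h'.symm, h⟩⟩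

lemma IsGridStep.edgeDist_corners {u w : Fin r × Fin t} (h : IsGridStep u w)
    (hr : 0 < r) (ht : 0 < t) :
    edgeDist (pathGraph r □ pathGraph t) (⟨0, hr⟩, ⟨0, ht⟩) s(u, w) = u.1 + u.2 ∧
      edgeDist (pathGraph r □ pathGraph t) (⟨r - 1, Nat.sub_lt hr one_pos⟩, ⟨0, ht⟩) s(u, w) =
        r - 1 - w.1 + u.2 := by
  simp only [edgeDist_mk, grid_dist, Nat.dist]
  rcases h with ⟨h₁, h₂⟩ | ⟨h₁, h₂⟩ <;> omega

lemma isEdgeMetricGenerator_grid_corners (hr : 0 < r) (ht : 0 < t) :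
    IsEdgeMetricGenerator (pathGraph r □ pathGraph t)
      {(⟨0, hr⟩, ⟨0, ht⟩), (⟨r - 1, Nat.sub_lt hr one_pos⟩, ⟨0, ht⟩)} := by
  intro e₁ he₁ e₂ he₂ hne
  obtain ⟨u₁, w₁, rfl, h₁⟩ := exists_eq_mk_isGridStep he₁
  obtain ⟨u₂, w₂, rfl, h₂⟩ := exists_eq_mk_isGridStep he₂
  by_contra! hd
  have hd₀ := hd _ (Set.mem_insert _ _)
  have hd₁ := hd _ (Set.mem_insert_of_mem _ rfl)
  rw [(h₁.edgeDist_corners hr ht).1, (h₂.edgeDist_corners hr ht).1] at hd₀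
  rw [(h₁.edgeDist_corners hr ht).2, (h₂.edgeDist_corners hr ht).2] at hd₁
  obtain ⟨rfl, rfl⟩ : u₁ = u₂ ∧ w₁ = w₂ := by
    unfold IsGridStep at h₁ h₂
    simp only [Prod.ext_iff, Fin.ext_iff]
    refine ⟨⟨?_, ?_⟩, ?_, ?_⟩ <;> omega
  exact hne rfl

end Grid

theorem edim_grid (r t : ℕ) (ht : 2 ≤ t) (hrt : t ≤ r) :
    IsEdgeMetricGenerator (pathGraph r □ pathGraph t)
      {(⟨0, by omega⟩, ⟨0, by omega⟩), (⟨r - 1, by omega⟩, ⟨0, by omega⟩)} ∧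
    edim (pathGraph r □ pathGraph t) = 2 := by
  have : Nontrivial (Fin r) := Fin.nontrivial_iff_two_le.2 (ht.trans hrt)
  have : Nontrivial (Fin t) := Fin.nontrivial_iff_two_le.2 ht
  have hgen := isEdgeMetricGenerator_grid_corners (r := r) (t := t) (by omega) (by omega)
  refine ⟨hgen, edim_eq_two ?_ hgen fun v ↦ not_isEdgeMetricGenerator_boxProd_singleton
    (pathGraph_preconnected r) (pathGraph_preconnected t) v⟩
  simp only [ne_eq, Prod.mk.injEq, Fin.mk.injEq, and_true]
  omega
end

section
/- For any connected graph G with maximum degree Δ(G), edim(G) ≥ ⌈log₂ Δ(G)⌉. -/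
open SimpleGraph

/-! The edges at a vertex `u` of maximum degree `Δ` take at most two distances to any vertex `v`,
namely `d(v, u)` and `d(v, u) - 1`. Hence the distance vectors to a generator `S` of those `Δ`
edges are pairwise distinct and each is determined by a subset of `S`, so `Δ ≤ 2 ^ |S|`. -/

namespace SimpleGraph

variable {V : Type*} {G : SimpleGraph V}

@[simp]
lemma edgeDist_mk (v x y : V) : edgeDist G v s(x, y) = min (G.dist v x) (G.dist v y) := rfl

lemma edgeDist_eq_zero_of_mem {v : V} {e : Sym2 V} (hv : v ∈ e) : edgeDist G v e = 0 := by
  induction e with | h x y =>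
  rcases Sym2.mem_iff.1 hv with rfl | rfl <;> simp

lemma Connected.edgeDist_pos_of_notMem (hG : G.Connected) {v : V} {e : Sym2 V} (hv : v ∉ e) :
    0 < edgeDist G v e := by
  induction e with | h x y =>
  rw [Sym2.mem_iff, not_or] at hv
  simpa using ⟨hG.pos_dist_of_ne hv.1, hG.pos_dist_of_ne hv.2⟩

lemma Connected.isEdgeMetricGenerator_univ (hG : G.Connected) :
    IsEdgeMetricGenerator G Set.univ := by
  intro e₁ _ e₂ _ hne
  obtain ⟨v, hv⟩ : ∃ v, ¬(v ∈ e₁ ↔ v ∈ e₂) := by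
    by_contra! h
    exact hne (Sym2.ext h)
  refine ⟨v, trivial, ?_⟩
  by_cases hv₁ : v ∈ e₁
  · rw [edgeDist_eq_zero_of_mem hv₁]
    exact (hG.edgeDist_pos_of_notMem (by tauto)).ne
  · rw [edgeDist_eq_zero_of_mem (by tauto : v ∈ e₂)]
    exact (hG.edgeDist_pos_of_notMem hv₁).ne'

lemma Connected.edgeDist_of_mem_incidenceSet (hG : G.Connected) {u : V} (v : V) {e : Sym2 V}
    (he : e ∈ G.incidenceSet u) :
    edgeDist G v e = G.dist v u ∨ edgeDist G v e + 1 = G.dist v u := by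
  obtain ⟨w, rfl⟩ : ∃ w, e = s(u, w) := Sym2.mem_iff_exists.1 he.2
  have hw : G.dist v u ≤ G.dist v w + 1 :=
    (dist_eq_one_iff_adj.2 (G.mem_edgeSet.1 he.1).symm) ▸ hG.dist_triangle
  rw [edgeDist_mk]
  omega

lemma Connected.edgeDist_eq_of_mem_incidenceSet (hG : G.Connected) {u : V} (v : V)
    {e₁ e₂ : Sym2 V} (he₁ : e₁ ∈ G.incidenceSet u) (he₂ : e₂ ∈ G.incidenceSet u)
    (h : edgeDist G v e₁ = G.dist v u ↔ edgeDist G v e₂ = G.dist v u) :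
    edgeDist G v e₁ = edgeDist G v e₂ := by
  rcases hG.edgeDist_of_mem_incidenceSet v he₁ with h₁ | h₁ <;>
    rcases hG.edgeDist_of_mem_incidenceSet v he₂ with h₂ | h₂ <;> omega

lemma Connected.degree_le_two_pow_card (hG : G.Connected) {S : Finset V}
    (hS : IsEdgeMetricGenerator G S) (u : V) [Fintype (G.neighborSet u)] :
    G.degree u ≤ 2 ^ S.card := by
  classical
  rw [← card_incidenceFinset_eq_degree, ← Finset.card_powerset]
  refine Finset.card_le_card_of_injOn
    (fun e => S.filter fun v => edgeDist G v e = G.dist v u)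
    (fun _ _ => Finset.mem_powerset.2 (Finset.filter_subset _ _)) ?_
  intro e₁ he₁ e₂ he₂ hf
  rw [Finset.mem_coe, mem_incidenceFinset] at he₁ he₂
  by_contra hne
  obtain ⟨v, hvS, hv⟩ := hS e₁ (G.incidenceSet_subset u he₁) e₂ (G.incidenceSet_subset u he₂) hne
  have hbit := Finset.ext_iff.1 hf v
  simp only [Finset.mem_filter, Finset.mem_coe.1 hvS, true_and] at hbit
  exact hv (hG.edgeDist_eq_of_mem_incidenceSet v he₁ he₂ hbit)

lemma Connected.exists_isEdgeMetricGenerator_card_eq_edim [Fintype V] (hG : G.Connected) :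
    ∃ S : Finset V, S.card = edim G ∧ IsEdgeMetricGenerator G S :=
  Nat.sInf_mem (s := {k | ∃ S : Finset V, S.card = k ∧ IsEdgeMetricGenerator G ↑S})
    ⟨_, Finset.univ, rfl, by simpa using hG.isEdgeMetricGenerator_univ⟩

end SimpleGraph

theorem edim_ge_clog_maxDegree {V : Type*} [Fintype V] (G : SimpleGraph V)
    [DecidableRel G.Adj] (hG : G.Connected) :
    Nat.clog 2 G.maxDegree ≤ edim G := by
  have := hG.nonempty
  obtain ⟨S, hScard, hS⟩ := hG.exists_isEdgeMetricGenerator_card_eq_edim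
  obtain ⟨u, hu⟩ := G.exists_maximal_degree_vertex
  rw [← hScard, Nat.clog_le_iff_le_pow one_lt_two, hu]
  exact hG.degree_le_two_pow_card hS u
end
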